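/- There is a universal constant C > 0 with the following property. For all integers k ≥ 1, all γ ≥ 1, all ε ∈ (0, 1], and all θ, θ' ∈ Θ_k such that 1/γ ≤ τ_i ≤ γ and 1/γ ≤ τ'_i ≤ γ for every i ∈ {1,…,k}: if the Euclidean distance between the parameter vectors satisfies (Σ_{i=1}^k [(w_i − w'_i)² + (μ_i − μ'_i)² + (τ_i − τ'_i)²])^{1/2} ≤ C·(1/γ)·(ε/k)², then ‖M_θ − M_{θ'}‖₁ ≤ ε. -/

import Mathlib

/-!
Move from `θ'` to `θ` along the straight segment in parameter space. For one component, the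
fundamental theorem of calculus and Tonelli bound `‖N_{μ₁,τ₁} - N_{μ₀,τ₀}‖₁` by the largest
`L¹` norm of the `t`-derivative along the segment. That derivative is the density times the score
`(1/τ - τ u²) dτ + τ² u dμ` (`u = x - μ`), which by AM-GM is at most
`(|dτ| + τ² |dμ| / 2) (1/τ + τ u²)`; since `u` has variance `1/τ²`, the density integrates this to
`2 |dτ| / τ + τ |dμ| ≤ 2γ |dτ| + γ |dμ|`. Adding the weight errors, coordinates within `δ` give an
`L¹` error of at most `4γδk`, which is `ε² / k ≤ ε` for `δ = (ε/k)² / (4γ)`.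
-/

open MeasureTheory

/-- The Gaussian pdf with mean `μ` and precision `τ`. -/
noncomputable def gaussPdf (μ τ x : ℝ) : ℝ :=
  τ / Real.sqrt (2 * Real.pi) * Real.exp (-(τ ^ 2 * (x - μ) ^ 2) / 2)

/-- The pdf of the `k`-GMM with weights `w`, means `μ` and precisions `τ`. -/
noncomputable def mix {k : ℕ} (w μ τ : Fin k → ℝ) (x : ℝ) : ℝ :=
  ∑ i, w i * gaussPdf (μ i) (τ i) x

open Set Real ProbabilityTheory NNReal

theorem integral_abs_sub_le_of_hasDerivAt {α : Type*} [MeasurableSpace α] {ν : Measure α}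
    [SFinite ν] {F D : ℝ → α → ℝ} {a b B : ℝ} (hab : a ≤ b)
    (hD : Measurable (Function.uncurry D))
    (hderiv : ∀ x, ∀ t ∈ Icc a b, HasDerivAt (F · x) (D t x) t)
    (hDint : ∀ x, IntervalIntegrable (D · x) volume a b)
    (hint : ∀ t ∈ Icc a b, Integrable (D t) ν)
    (hbound : ∀ t ∈ Icc a b, ∫ x, |D t x| ∂ν ≤ B) :
    ∫ x, |F b x - F a x| ∂ν ≤ (b - a) * B := by
  have hB : 0 ≤ B := (integral_nonneg fun _ => abs_nonneg _).trans (hbound a ⟨le_rfl, hab⟩)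
  have hFTC : ∀ x, F b x - F a x = ∫ t in Ioc a b, D t x := fun x => by
    rw [← intervalIntegral.integral_of_le hab, intervalIntegral.integral_eq_sub_of_hasDerivAt
      (fun t ht => hderiv x t (uIcc_of_le hab ▸ ht)) (hDint x)]
  refine (Real.le_norm_self _).trans ((norm_integral_le_lintegral_norm _).trans
    (ENNReal.toReal_le_of_le_ofReal (mul_nonneg (sub_nonneg.2 hab) hB) ?_))
  calc ∫⁻ x, ENNReal.ofReal ‖|F b x - F a x|‖ ∂ν
      ≤ ∫⁻ x, (∫⁻ t in Ioc a b, ‖D t x‖ₑ) ∂ν := lintegral_mono fun x => by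
        rw [norm_abs_eq_norm, ofReal_norm, hFTC x]
        exact enorm_integral_le_lintegral_enorm _
    _ = ∫⁻ t in Ioc a b, ∫⁻ x, ‖D t x‖ₑ ∂ν :=
        lintegral_lintegral_swap (hD.comp measurable_swap).enorm.aemeasurable
    _ ≤ ∫⁻ _ in Ioc a b, ENNReal.ofReal B := setLIntegral_mono measurable_const fun t ht => by
        rw [← ofReal_integral_norm_eq_lintegral_enorm (hint t (Ioc_subset_Icc_self ht))]
        exact ENNReal.ofReal_le_ofReal (hbound t (Ioc_subset_Icc_self ht))
    _ = ENNReal.ofReal ((b - a) * B) := by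
        rw [setLIntegral_const, Real.volume_Ioc, ← ENNReal.ofReal_mul hB, mul_comm]

theorem integral_abs_sum_mul_sub_sum_mul_le {ι α : Type*} [MeasurableSpace α] {ν : Measure α}
    (s : Finset ι) (a b : ι → ℝ) {f g : ι → α → ℝ} (hf : ∀ i ∈ s, Integrable (f i) ν)
    (hg : ∀ i ∈ s, Integrable (g i) ν) :
    ∫ x, |∑ i ∈ s, a i * f i x - ∑ i ∈ s, b i * g i x| ∂ν ≤
      ∑ i ∈ s, (|a i - b i| * ∫ x, |f i x| ∂ν + |b i| * ∫ x, |f i x - g i x| ∂ν) := by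
  have hf_abs : ∀ i ∈ s, Integrable (fun x => |f i x|) ν := fun i hi => (hf i hi).abs
  have hfg_abs : ∀ i ∈ s, Integrable (fun x => |f i x - g i x|) ν := fun i hi =>
    ((hf i hi).sub (hg i hi)).abs
  have hterm : ∀ i ∈ s, Integrable (fun x => |a i - b i| * |f i x| + |b i| * |f i x - g i x|) ν :=
    fun i hi => ((hf_abs i hi).const_mul _).add ((hfg_abs i hi).const_mul _)
  calc ∫ x, |∑ i ∈ s, a i * f i x - ∑ i ∈ s, b i * g i x| ∂ν
      ≤ ∫ x, ∑ i ∈ s, (|a i - b i| * |f i x| + |b i| * |f i x - g i x|) ∂ν := by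
        refine integral_mono_of_nonneg (ae_of_all _ fun _ => abs_nonneg _)
          (integrable_finsetSum _ hterm) (ae_of_all _ fun x => ?_)
        dsimp only
        rw [← Finset.sum_sub_distrib]
        refine (Finset.abs_sum_le_sum_abs _ _).trans (Finset.sum_le_sum fun i _ => ?_)
        rw [← abs_mul, ← abs_mul, show a i * f i x - b i * g i x
          = (a i - b i) * f i x + b i * (f i x - g i x) by ring]
        exact abs_add_le _ _
    _ = _ := by
        rw [integral_finsetSum _ hterm]
        refine Finset.sum_congr rfl fun i hi => ?_
        rw [integral_add ((hf_abs i hi).const_mul _) ((hfg_abs i hi).const_mul _),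
          integral_const_mul, integral_const_mul]

lemma integral_sq_sub_gaussianReal (μ : ℝ) (v : ℝ≥0) :
    ∫ x, (x - μ) ^ 2 ∂gaussianReal μ v = v := by
  rw [← variance_fun_id_gaussianReal, variance_eq_integral aemeasurable_id',
    integral_id_gaussianReal]

lemma integrable_sq_sub_gaussianReal (μ : ℝ) (v : ℝ≥0) :
    Integrable (fun x => (x - μ) ^ 2) (gaussianReal μ v) :=
  ((memLp_id_gaussianReal' 2 (by simp)).sub (memLp_const μ)).integrable_sq

lemma MeasureTheory.Integrable.gaussianPDFReal_mul {μ : ℝ} {v : ℝ≥0} {f : ℝ → ℝ}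
    (hf : Integrable f (gaussianReal μ v)) (hv : v ≠ 0) :
    Integrable fun x => gaussianPDFReal μ v x * f x := by
  rw [gaussianReal_of_var_ne_zero _ hv, integrable_withDensity_iff_integrable_smul'
    (measurable_gaussianPDF _ _) (ae_of_all _ fun _ => gaussianPDF_lt_top)] at hf
  simpa [toReal_gaussianPDF] using hf

lemma gaussPdf_eq_gaussianPDFReal (M : ℝ) {S : ℝ} (hS : 0 < S) :
    gaussPdf M S = gaussianPDFReal M (S ^ 2)⁻¹.toNNReal := by
  ext x
  rw [gaussPdf, gaussianPDFReal, coe_toNNReal _ (by positivity),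
    sqrt_mul (x := 2 * π) (by positivity), Real.sqrt_inv, sqrt_sq hS.le]
  field_simp

@[fun_prop]
lemma Continuous.gaussPdf {α : Type*} [TopologicalSpace α] {m s x : α → ℝ} (hm : Continuous m)
    (hs : Continuous s) (hx : Continuous x) :
    Continuous fun a => _root_.gaussPdf (m a) (s a) (x a) := by
  unfold _root_.gaussPdf; fun_prop

noncomputable def gaussScore (M S dM dS x : ℝ) : ℝ :=
  (S⁻¹ - S * (x - M) ^ 2) * dS + S ^ 2 * (x - M) * dM

lemma HasDerivAt.gaussPdf {m s : ℝ → ℝ} {m' s' t : ℝ} (hm : HasDerivAt m m' t)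
    (hs : HasDerivAt s s' t) (hst : s t ≠ 0) (x : ℝ) :
    HasDerivAt (fun t => gaussPdf (m t) (s t) x)
      (gaussPdf (m t) (s t) x * gaussScore (m t) (s t) m' s' x) t := by
  have hexp := (((hs.fun_pow 2).fun_mul ((hm.const_sub x).fun_pow 2)).fun_neg.div_const 2).exp
  refine ((hs.div_const √(2 * π)).mul hexp).congr_deriv ?_
  simp only [_root_.gaussPdf, gaussScore]
  field_simp
  ring

section gaussPdf

variable (M : ℝ) {S : ℝ} (hS : 0 < S)
include hS

lemma gaussPdf_nonneg (x : ℝ) : 0 ≤ gaussPdf M S x := by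
  rw [gaussPdf_eq_gaussianPDFReal M hS]
  exact gaussianPDFReal_nonneg _ _ _

lemma integrable_gaussPdf : Integrable (gaussPdf M S) := by
  rw [gaussPdf_eq_gaussianPDFReal M hS]
  exact integrable_gaussianPDFReal _ _

lemma integral_gaussPdf : ∫ x, gaussPdf M S x = 1 := by
  rw [gaussPdf_eq_gaussianPDFReal M hS]
  exact integral_gaussianPDFReal_eq_one _ (by simp [hS.ne'])

lemma integral_abs_gaussPdf : ∫ x, |gaussPdf M S x| = 1 := by
  simp_rw [abs_of_nonneg (gaussPdf_nonneg M hS _)]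
  exact integral_gaussPdf M hS

lemma integrable_gaussPdf_mul_moment :
    Integrable fun x => gaussPdf M S x * (S⁻¹ + S * (x - M) ^ 2) := by
  rw [gaussPdf_eq_gaussianPDFReal M hS]
  exact ((integrable_const _).add
    ((integrable_sq_sub_gaussianReal _ _).const_mul S)).gaussianPDFReal_mul (by simp [hS.ne'])

lemma integral_gaussPdf_mul_moment :
    ∫ x, gaussPdf M S x * (S⁻¹ + S * (x - M) ^ 2) = 2 / S := by
  have hv : (S ^ 2)⁻¹.toNNReal ≠ 0 := by simp [hS.ne']
  rw [gaussPdf_eq_gaussianPDFReal M hS]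
  trans ∫ x, S⁻¹ + S * (x - M) ^ 2 ∂gaussianReal M (S ^ 2)⁻¹.toNNReal
  · exact (integral_gaussianReal_eq_integral_smul hv).symm
  rw [integral_add (integrable_const _) ((integrable_sq_sub_gaussianReal _ _).const_mul S),
    integral_const, probReal_univ, smul_eq_mul, one_mul, integral_const_mul,
    integral_sq_sub_gaussianReal, coe_toNNReal _ (by positivity)]
  field_simp
  ring

lemma abs_gaussScore_le (dM dS x : ℝ) :
    |gaussScore M S dM dS x| ≤ (|dS| + S ^ 2 * |dM| / 2) * (S⁻¹ + S * (x - M) ^ 2) := by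
  set u := x - M
  have hdS : |S⁻¹ - S * u ^ 2| ≤ S⁻¹ + S * u ^ 2 := by
    refine (abs_sub _ _).trans_eq ?_
    rw [abs_of_pos (inv_pos.2 hS), abs_of_nonneg (by positivity)]
  -- AM-GM: `2 S |u| ≤ 1 + S² u²`
  have hdM : |S ^ 2 * u| ≤ S ^ 2 / 2 * (S⁻¹ + S * u ^ 2) := by
    rw [abs_mul, abs_of_nonneg (sq_nonneg S)]
    have : S ^ 2 / 2 * (S⁻¹ + S * u ^ 2) = S / 2 * (1 + S ^ 2 * |u| ^ 2) := by
      rw [sq_abs]; field_simp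
    rw [this]
    nlinarith [mul_nonneg hS.le (sq_nonneg (S * |u| - 1))]
  calc |gaussScore M S dM dS x|
      ≤ |S⁻¹ - S * u ^ 2| * |dS| + |S ^ 2 * u| * |dM| := by
        rw [← abs_mul, ← abs_mul]; exact abs_add_le _ _
    _ ≤ (S⁻¹ + S * u ^ 2) * |dS| + S ^ 2 / 2 * (S⁻¹ + S * u ^ 2) * |dM| := by gcongr
    _ = (|dS| + S ^ 2 * |dM| / 2) * (S⁻¹ + S * u ^ 2) := by ring

lemma integrable_gaussPdf_mul_gaussScore (dM dS : ℝ) :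
    Integrable fun x => gaussPdf M S x * gaussScore M S dM dS x := by
  refine ((integrable_gaussPdf_mul_moment M hS).const_mul (|dS| + S ^ 2 * |dM| / 2)).mono'
    (by unfold gaussScore; fun_prop) (ae_of_all _ fun x => ?_)
  rw [norm_mul, norm_of_nonneg (gaussPdf_nonneg M hS x), mul_left_comm]
  exact mul_le_mul_of_nonneg_left (abs_gaussScore_le M hS dM dS x) (gaussPdf_nonneg M hS x)

lemma integral_abs_gaussPdf_mul_gaussScore_le (dM dS : ℝ) :
    ∫ x, |gaussPdf M S x * gaussScore M S dM dS x| ≤ 2 * |dS| / S + S * |dM| :=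
  calc ∫ x, |gaussPdf M S x * gaussScore M S dM dS x|
      ≤ ∫ x, (|dS| + S ^ 2 * |dM| / 2) * (gaussPdf M S x * (S⁻¹ + S * (x - M) ^ 2)) := by
        refine integral_mono (integrable_gaussPdf_mul_gaussScore M hS dM dS).abs
          ((integrable_gaussPdf_mul_moment M hS).const_mul _) fun x => ?_
        rw [abs_mul, abs_of_nonneg (gaussPdf_nonneg M hS x), mul_left_comm]
        exact mul_le_mul_of_nonneg_left (abs_gaussScore_le M hS dM dS x) (gaussPdf_nonneg M hS x)
    _ = 2 * |dS| / S + S * |dM| := by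
        rw [integral_const_mul, integral_gaussPdf_mul_moment M hS]
        field_simp

end gaussPdf

theorem integral_abs_gaussPdf_sub_le {γ μ₀ μ₁ τ₀ τ₁ : ℝ} (hγ : 0 < γ) (h₀ : τ₀ ∈ Icc γ⁻¹ γ)
    (h₁ : τ₁ ∈ Icc γ⁻¹ γ) :
    ∫ x, |gaussPdf μ₁ τ₁ x - gaussPdf μ₀ τ₀ x| ≤ γ * |μ₁ - μ₀| + 2 * γ * |τ₁ - τ₀| := by
  set m : ℝ → ℝ := fun t => μ₀ + t * (μ₁ - μ₀)
  set s : ℝ → ℝ := fun t => τ₀ + t * (τ₁ - τ₀)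
  set D : ℝ → ℝ → ℝ := fun t x =>
    gaussPdf (m t) (s t) x * gaussScore (m t) (s t) (μ₁ - μ₀) (τ₁ - τ₀) x
  have hs : ∀ t ∈ Icc (0 : ℝ) 1, s t ∈ Icc γ⁻¹ γ := fun t ht =>
    (convex_Icc _ _).add_smul_sub_mem h₀ h₁ ht
  have hs_pos : ∀ t ∈ Icc (0 : ℝ) 1, 0 < s t := fun t ht => (inv_pos.2 hγ).trans_le (hs t ht).1
  have hm' : ∀ t, HasDerivAt m (μ₁ - μ₀) t := fun t => (hasDerivAt_mul_const _).const_add μ₀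
  have hs' : ∀ t, HasDerivAt s (τ₁ - τ₀) t := fun t => (hasDerivAt_mul_const _).const_add τ₀
  have hD_cont : ∀ x, ContinuousOn (D · x) (Icc 0 1) := fun x t ht => by
    have hst := (hs_pos t ht).ne'
    apply ContinuousAt.continuousWithinAt
    simp only [D, m, s, gaussScore]
    fun_prop (disch := assumption)
  have key := integral_abs_sub_le_of_hasDerivAt (ν := volume) zero_le_one
    (by simp only [m, s, gaussScore]; fun_prop)
    (fun x t ht => (hm' t).gaussPdf (hs' t) (hs_pos t ht).ne' x)
    (fun x => (hD_cont x).intervalIntegrable_of_Icc zero_le_one)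
    (fun t ht => integrable_gaussPdf_mul_gaussScore _ (hs_pos t ht) _ _)
    (fun t ht => (integral_abs_gaussPdf_mul_gaussScore_le _ (hs_pos t ht) _ _).trans <| by
      have hinv : (s t)⁻¹ ≤ γ := inv_le_of_inv_le₀ hγ (hs t ht).1
      calc 2 * |τ₁ - τ₀| / s t + s t * |μ₁ - μ₀| = 2 * |τ₁ - τ₀| * (s t)⁻¹ + s t * |μ₁ - μ₀| := by
            ring
        _ ≤ 2 * |τ₁ - τ₀| * γ + γ * |μ₁ - μ₀| := by gcongr; exact (hs t ht).2
        _ = γ * |μ₁ - μ₀| + 2 * γ * |τ₁ - τ₀| := by ring)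
  simpa [m, s] using key

theorem integral_abs_mix_sub_le {k : ℕ} {γ δ : ℝ} (hγ : 1 ≤ γ) {w μ τ w' μ' τ' : Fin k → ℝ}
    (hτ : ∀ i, τ i ∈ Icc γ⁻¹ γ) (hτ' : ∀ i, τ' i ∈ Icc γ⁻¹ γ) (hw' : ∀ i, 0 ≤ w' i)
    (hw'_sum : ∑ i, w' i = 1)
    (hclose : ∀ i, |w i - w' i| ≤ δ ∧ |μ i - μ' i| ≤ δ ∧ |τ i - τ' i| ≤ δ) :
    ∫ x, |mix w μ τ x - mix w' μ' τ' x| ≤ k * (4 * γ * δ) := by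
  have hγ₀ : 0 < γ := one_pos.trans_le hγ
  have hpos : ∀ {s}, s ∈ Icc γ⁻¹ γ → 0 < s := fun hs => (inv_pos.2 hγ₀).trans_le hs.1
  calc ∫ x, |mix w μ τ x - mix w' μ' τ' x|
      ≤ ∑ i, (|w i - w' i| * (∫ x, |gaussPdf (μ i) (τ i) x|)
          + |w' i| * ∫ x, |gaussPdf (μ i) (τ i) x - gaussPdf (μ' i) (τ' i) x|) := by
        unfold mix
        exact integral_abs_sum_mul_sub_sum_mul_le _ w w'
          (fun i _ => integrable_gaussPdf _ (hpos (hτ i)))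
          (fun i _ => integrable_gaussPdf _ (hpos (hτ' i)))
    _ ≤ ∑ _i : Fin k, 4 * γ * δ := Finset.sum_le_sum fun i _ => by
        obtain ⟨hw, hμ, hτ_close⟩ := hclose i
        have hδ : 0 ≤ δ := (abs_nonneg _).trans hw
        have hw'_le : w' i ≤ 1 :=
          hw'_sum ▸ Finset.single_le_sum (fun j _ => hw' j) (Finset.mem_univ i)
        have hpair := integral_abs_gaussPdf_sub_le (μ₀ := μ' i) (μ₁ := μ i) hγ₀ (hτ' i) (hτ i)
        rw [integral_abs_gaussPdf _ (hpos (hτ i)), abs_of_nonneg (hw' i)]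
        calc |w i - w' i| * 1
              + w' i * ∫ x, |gaussPdf (μ i) (τ i) x - gaussPdf (μ' i) (τ' i) x|
            ≤ δ * 1 + 1 * (γ * δ + 2 * γ * δ) := by
              gcongr
              exact hpair.trans (by gcongr)
          _ ≤ 4 * γ * δ := by nlinarith
    _ = k * (4 * γ * δ) := by simp

lemma abs_le_of_sqrt_sum_sq_le {ι : Type*} [Fintype ι] {a b c : ι → ℝ} {δ : ℝ}
    (h : √(∑ i, (a i ^ 2 + b i ^ 2 + c i ^ 2)) ≤ δ) (i : ι) :
    |a i| ≤ δ ∧ |b i| ≤ δ ∧ |c i| ≤ δ := by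
  have hi : a i ^ 2 + b i ^ 2 + c i ^ 2 ≤ ∑ j, (a j ^ 2 + b j ^ 2 + c j ^ 2) :=
    Finset.single_le_sum (f := fun j => a j ^ 2 + b j ^ 2 + c j ^ 2) (fun j _ => by positivity)
      (Finset.mem_univ i)
  refine ⟨?_, ?_, ?_⟩ <;> refine (Real.abs_le_sqrt ?_).trans h <;>
    nlinarith [sq_nonneg (a i), sq_nonneg (b i), sq_nonneg (c i)]

theorem stmt7 :
    ∃ C : ℝ, 0 < C ∧
      ∀ (k : ℕ), 1 ≤ k → ∀ (γ ε : ℝ), 1 ≤ γ → 0 < ε → ε ≤ 1 →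
        ∀ (w μ τ w' μ' τ' : Fin k → ℝ),
          (∀ i, 0 ≤ w i) → (∑ i, w i = 1) → (∀ i, 0 < τ i) →
          (∀ i, 0 ≤ w' i) → (∑ i, w' i = 1) → (∀ i, 0 < τ' i) →
          (∀ i, 1 / γ ≤ τ i ∧ τ i ≤ γ) → (∀ i, 1 / γ ≤ τ' i ∧ τ' i ≤ γ) →
          Real.sqrt (∑ i, ((w i - w' i) ^ 2 + (μ i - μ' i) ^ 2 + (τ i - τ' i) ^ 2))
            ≤ C * (1 / γ) * (ε / (k : ℝ)) ^ 2 →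
          (∫ x, |mix w μ τ x - mix w' μ' τ' x|) ≤ ε := by
  refine ⟨1 / 4, by norm_num, ?_⟩
  intro k hk γ ε hγ hε₀ hε₁ w μ τ w' μ' τ' _ _ _ hw' hw'_sum _ hb hb' hdist
  have hk₁ : (1 : ℝ) ≤ k := by exact_mod_cast hk
  have hτ : ∀ i, τ i ∈ Icc γ⁻¹ γ := fun i => by rw [← one_div]; exact hb i
  have hτ' : ∀ i, τ' i ∈ Icc γ⁻¹ γ := fun i => by rw [← one_div]; exact hb' i
  calc ∫ x, |mix w μ τ x - mix w' μ' τ' x|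
      ≤ k * (4 * γ * (1 / 4 * (1 / γ) * (ε / k) ^ 2)) :=
        integral_abs_mix_sub_le hγ hτ hτ' hw' hw'_sum (abs_le_of_sqrt_sum_sq_le hdist)
    _ = ε ^ 2 / k := by field_simp
    _ ≤ ε := by rw [div_le_iff₀ (by positivity)]; nlinarith [mul_le_mul_of_nonneg_left hk₁ hε₀.le]
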